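/- arXiv:2010.08061 — 2 statements merged into one kernel-verified Lean document; each statement's English description precedes it below -/
import Mathlib

section
/- Let 0 < ε < 1/6 and consider the 4-armed, 2-dimensional loss matrix with columns ℓ'_1 = ((1−ε)/4, 3/4), ℓ'_2 = (3/4, 1/4), ℓ'_3 = ((3−ε)/8, (3+ε)/8), ℓ'_4 = ((3+ε)/8, (3−ε)/8). Then the minimum loss in dimension 1 is (1−ε)/4 (attained only by arm 1) and in dimension 2 is 1/4 (attained only by arm 2), and the function g(ω) = max{ ((2+ε)/4)·ω_2 + ((1+ε)/8)·ω_3 + ((1+3ε)/8)·ω_4 , (1/2)·ω_1 + ((1+ε)/8)·ω_3 + ((1−ε)/8)·ω_4 }, which is the ℓ∞-norm of the expected relative loss of the weight ω, attains its minimum over the probability simplex Σ_4 uniquely at ω = (0, 0, 1, 0), with minimum value (1+ε)/8. -/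
/-! On the simplex the two relative losses add up to `(1 + ε)/4 + (1 - ε)/4 * ω 0 + ω 1 / 4`, so
their maximum is at least `(1 + ε)/8`, with equality only if `ω 0 = ω 1 = 0`. On that edge the first
relative loss is `(1 + ε)/8 + ε/4 * ω 3`, which leaves `ω = (0, 0, 1, 0)` as the only minimizer. -/

theorem ciInf_eq_of_forall_ne_lt {α ι : Type*} [ConditionallyCompleteLattice α] {f : ι → α} {a : ι}
    (h : ∀ k, k ≠ a → f a < f k) : ⨅ k, f k = f a := by
  refine IsLeast.csInf_eq ⟨⟨a, rfl⟩, Set.forall_mem_range.2 fun k => ?_⟩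
  rcases eq_or_ne k a with rfl | hk
  exacts [le_rfl, (h k hk).le]

theorem ciSup_fin_two {α : Type*} [ConditionallyCompleteLattice α] (f : Fin 2 → α) :
    ⨆ i, f i = f 0 ⊔ f 1 := by
  rw [← Finset.sup'_univ_eq_ciSup]
  simp [Fin.univ_succ]

theorem eq_of_max_relative_loss_le {ε a b c d : ℝ} (hε : 0 < ε) (hε1 : ε < 1)
    (ha : 0 ≤ a) (hb : 0 ≤ b) (hd : 0 ≤ d) (hsum : a + b + c + d = 1)
    (hmax : max ((2 + ε)/4 * b + (1 + ε)/8 * c + (1 + 3*ε)/8 * d)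
      ((1/2) * a + (1 + ε)/8 * c + (1 - ε)/8 * d) ≤ (1 + ε)/8) :
    a = 0 ∧ b = 0 ∧ c = 1 ∧ d = 0 := by
  obtain ⟨hA, hB⟩ := max_le_iff.1 hmax
  have hab : (1 - ε)/4 * a + b/4 ≤ 0 := by linear_combination hA + hB - (1 + ε)/4 * hsum
  have ha0 : a = 0 := by nlinarith
  have hb0 : b = 0 := by nlinarith
  subst ha0 hb0
  have hd0 : d = 0 := by
    have : ε/4 * d ≤ 0 := by linear_combination hA - (1 + ε)/8 * hsum
    nlinarith
  exact ⟨rfl, rfl, by linarith, hd0⟩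

/-- Optimal weight computation for the alternative model ν′ in the proof of the
Ω(T^{2/3}) regret lower bound: for 0 < ε < 1/6 the ℓ∞-norm of the expected
relative loss g is uniquely minimized over the simplex at ω = (0,0,1,0), with
value (1+ε)/8. -/
theorem optimal_weight_alternative_model
    (ε : ℝ) (hε : 0 < ε) (hε' : ε < 1/6)
    (ℓ : Fin 2 → Fin 4 → ℝ)
    (hℓ : ℓ = ![![(1 - ε)/4, 3/4, (3 - ε)/8, (3 + ε)/8],
                ![3/4, 1/4, (3 + ε)/8, (3 - ε)/8]])
    (g : (Fin 4 → ℝ) → ℝ)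
    (hg : g = fun ω => max
        ((2 + ε)/4 * ω 1 + (1 + ε)/8 * ω 2 + (1 + 3*ε)/8 * ω 3)
        ((1/2) * ω 0 + (1 + ε)/8 * ω 2 + (1 - ε)/8 * ω 3)) :
    -- minimum loss in dimension 1 is (1−ε)/4, attained only by arm 1
    (ℓ 0 0 = (1 - ε)/4 ∧ ∀ k, k ≠ 0 → (1 - ε)/4 < ℓ 0 k) ∧
    -- minimum loss in dimension 2 is 1/4, attained only by arm 2
    (ℓ 1 1 = 1/4 ∧ ∀ k, k ≠ 1 → (1/4 : ℝ) < ℓ 1 k) ∧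
    -- g is the ℓ∞-norm of the expected relative loss of the weight ω
    (∀ ω : Fin 4 → ℝ, (∀ k, ω k ∈ Set.Icc (0:ℝ) 1) → (∑ k, ω k) = 1 →
      g ω = ⨆ i, ∑ k, ω k * (ℓ i k - ⨅ k', ℓ i k')) ∧
    -- the minimum over the simplex is uniquely attained at (0,0,1,0), with value (1+ε)/8
    (g ![0, 0, 1, 0] = (1 + ε)/8 ∧
      ∀ ω : Fin 4 → ℝ, (∀ k, ω k ∈ Set.Icc (0:ℝ) 1) → (∑ k, ω k) = 1 →
        ω ≠ ![0, 0, 1, 0] → (1 + ε)/8 < g ω) := by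
  subst hg
  have h00 : ℓ 0 0 = (1 - ε)/4 := by simp [hℓ]
  have h11 : ℓ 1 1 = 1/4 := by simp [hℓ]
  have min0 : ∀ k, k ≠ 0 → (1 - ε)/4 < ℓ 0 k := by
    intro k hk; fin_cases k <;> simp [hℓ] at hk ⊢ <;> linarith
  have min1 : ∀ k, k ≠ 1 → (1/4 : ℝ) < ℓ 1 k := by
    intro k hk; fin_cases k <;> simp [hℓ] at hk ⊢ <;> linarith
  refine ⟨⟨h00, min0⟩, ⟨h11, min1⟩, fun ω _ _ => ?_,
    by norm_num [Matrix.cons_val_two, Matrix.cons_val_three], fun ω hω hs hne => ?_⟩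
  · rw [ciSup_fin_two, ciInf_eq_of_forall_ne_lt (h00 ▸ min0), ciInf_eq_of_forall_ne_lt (h11 ▸ min1)]
    simp only [hℓ, Fin.sum_univ_four, Matrix.cons_val_zero, Matrix.cons_val_one, Matrix.cons_val_two,
      Matrix.cons_val_three, Matrix.head_cons, Matrix.tail_cons]
    congr 1 <;> ring
  · by_contra! hle
    obtain ⟨h0, h1, h2, h3⟩ := eq_of_max_relative_loss_le hε (by linarith) (hω 0).1 (hω 1).1 (hω 3).1
      (by simpa [Fin.sum_univ_four] using hs) hle
    exact hne (funext fun k => by fin_cases k <;> simp [h0, h1, h2, h3])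
end

section
/- Let ε ∈ (0, 1/6] and let N_1, N_2, N_3, N_4 ≥ 0 be real numbers with N_1 + N_2 + N_3 + N_4 = T. Then max{ −((1+ε)/8)·N_1 + ((3+ε)/8)·N_2 + (ε/4)·N_4 , ((3−ε)/8)·N_1 − ((1+ε)/8)·N_2 − (ε/4)·N_4 } ≥ (1/144)·N_1 + (1/6)·N_2 + (ε/12)·(T − N_3). -/
/-!
Bound the maximum by the average with weights `2/3` and `1/3`. In that average the `N₄` terms
equal `ε/12 · N₄` exactly, and, once `T - N₃` is replaced by `N₁ + N₂ + N₄`, what remains over the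
right-hand side is `5(1 - 6ε)/144 · N₁ + (1 - ε)/24 · N₂`, which is nonnegative for `ε ≤ 1/6`.
-/

theorem regret_pointwise_lower_bound_general
    (ε T N₁ N₂ N₃ N₄ : ℝ) (hε' : ε ≤ 1/6)
    (h₁ : 0 ≤ N₁) (h₂ : 0 ≤ N₂)
    (hT : N₁ + N₂ + N₃ + N₄ = T) :
    max (-((1 + ε)/8) * N₁ + (3 + ε)/8 * N₂ + ε/4 * N₄)
        ((3 - ε)/8 * N₁ - (1 + ε)/8 * N₂ - ε/4 * N₄)
    ≥ 1/144 * N₁ + 1/6 * N₂ + ε/12 * (T - N₃) := by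
  set A := -((1 + ε)/8) * N₁ + (3 + ε)/8 * N₂ + ε/4 * N₄
  set B := (3 - ε)/8 * N₁ - (1 + ε)/8 * N₂ - ε/4 * N₄
  have hgap : (2/3 : ℝ) • A + (1/3 : ℝ) • B - (1/144 * N₁ + 1/6 * N₂ + ε/12 * (T - N₃))
      = 5 * (1 - 6 * ε) / 144 * N₁ + (1 - ε) / 24 * N₂ := by
    subst hT
    simp only [A, B, smul_eq_mul]
    ring
  have hgap_nonneg : 0 ≤ 5 * (1 - 6 * ε) / 144 * N₁ + (1 - ε) / 24 * N₂ :=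
    add_nonneg (mul_nonneg (by linarith) h₁) (mul_nonneg (by linarith) h₂)
  calc 1/144 * N₁ + 1/6 * N₂ + ε/12 * (T - N₃)
      ≤ (2/3 : ℝ) • A + (1/3 : ℝ) • B := by linarith
    _ ≤ max A B := Convex.combo_le_max A B (by norm_num) (by norm_num) (by norm_num)

/-- Pointwise regret lower bound in the proof of the Ω(T^{2/3}) lower bound. -/
theorem regret_pointwise_lower_bound
    (ε T N₁ N₂ N₃ N₄ : ℝ) (hε : 0 < ε) (hε' : ε ≤ 1/6)
    (h₁ : 0 ≤ N₁) (h₂ : 0 ≤ N₂) (h₃ : 0 ≤ N₃) (h₄ : 0 ≤ N₄)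
    (hT : N₁ + N₂ + N₃ + N₄ = T) :
    max (-((1 + ε)/8) * N₁ + (3 + ε)/8 * N₂ + ε/4 * N₄)
        ((3 - ε)/8 * N₁ - (1 + ε)/8 * N₂ - ε/4 * N₄)
    ≥ 1/144 * N₁ + 1/6 * N₂ + ε/12 * (T - N₃) :=
  regret_pointwise_lower_bound_general ε T N₁ N₂ N₃ N₄ hε' h₁ h₂ hT
end
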